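/- (Discrete higher-order Euler–Lagrange equation, r = 2 on ℤ) Let a, b ∈ ℤ with b ≥ a + 5, and let L : ℤ × ℝ × ℝ × ℝ → ℝ, (t, u₀, u₁, u₂) ↦ L(t,u₀,u₁,u₂), be continuously differentiable in (u₀, u₁, u₂). Suppose y* : {a, …, b} → ℝ is a local minimizer (with respect to the sup norm) of the functional 𝓛[y] = ∑_{t=a}^{b−2} L(t, y(t+2), Δy(t+1), Δ²y(t)) subject to y(a) = y_a, y(b−1) = y_b, Δy(a) = y_a¹, Δy(b−1) = y_b¹, where Δy(t) = y(t+1) − y(t). Then for all t ∈ {a, …, b−4}: L_{u₀}(·)(t) − Δ[L_{u₁}(·)](t) + Δ²[L_{u₂}(·)](t) = 0, where (·) = (t, y*(t+2), Δy*(t+1), Δ²y*(t)) and Δ, Δ² act on the functions t ↦ L_{u₁}(·), t ↦ L_{u₂}(·). -/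

import Mathlib

/-!
Fix `t ∈ {a, …, b - 4}` and perturb the minimizer in the direction `η = Pi.single (t + 2) 1`.
As `t + 2` lies strictly inside `{a + 2, …, b - 2}`, every `y* + ε η` satisfies the boundary
conditions and is uniformly close to `y*` for small `ε`, so `ε ↦ 𝓛[y* + ε η]` has a local minimum
at `0` and its derivative there vanishes. By the chain rule this derivative is
`∑ₛ η(s+2) L_{u₀}(s) + Δη(s+1) L_{u₁}(s) + Δ²η(s) L_{u₂}(s)`, and only `s = t, t+1, t+2`
contribute: their contributions add up to the Euler–Lagrange expression at `t`.
-/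

open Filter Topology

/-- The paper's `F(t, y^{σ²}(t), y^{σΔ}(t), y^{Δ²}(t))` on the time scale `ℤ`. -/
def evalJet (F : ℤ → ℝ → ℝ → ℝ → ℝ) (y : ℤ → ℝ) (t : ℤ) : ℝ :=
  F t (y (t + 2)) (y (t + 2) - y (t + 1)) (y (t + 2) - 2 * y (t + 1) + y t)

def discreteAction (L : ℤ → ℝ → ℝ → ℝ → ℝ) (s : Finset ℤ) (y : ℤ → ℝ) : ℝ :=
  ∑ t ∈ s, evalJet L y t

def firstVariation (L0 L1 L2 : ℤ → ℝ → ℝ → ℝ → ℝ) (s : Finset ℤ) (y η : ℤ → ℝ) : ℝ :=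
  ∑ t ∈ s, (η (t + 2) * evalJet L0 y t + (η (t + 2) - η (t + 1)) * evalJet L1 y t
    + (η (t + 2) - 2 * η (t + 1) + η t) * evalJet L2 y t)

def eulerLagrange (L0 L1 L2 : ℤ → ℝ → ℝ → ℝ → ℝ) (y : ℤ → ℝ) (t : ℤ) : ℝ :=
  evalJet L0 y t - (evalJet L1 y (t + 1) - evalJet L1 y t)
    + (evalJet L2 y (t + 2) - 2 * evalJet L2 y (t + 1) + evalJet L2 y t)

theorem HasFDerivAt.apply_eq_of_hasDerivAt_partials {F : ℝ × ℝ × ℝ → ℝ} {f : ℝ × ℝ × ℝ →L[ℝ] ℝ}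
    {c₀ c₁ c₂ p₀ p₁ p₂ : ℝ} (hF : HasFDerivAt F f (c₀, c₁, c₂))
    (h₀ : HasDerivAt (fun x => F (x, c₁, c₂)) p₀ c₀)
    (h₁ : HasDerivAt (fun x => F (c₀, x, c₂)) p₁ c₁)
    (h₂ : HasDerivAt (fun x => F (c₀, c₁, x)) p₂ c₂) (v : ℝ × ℝ × ℝ) :
    f v = v.1 * p₀ + v.2.1 * p₁ + v.2.2 * p₂ := by
  have e₀ : f (1, 0, 0) = p₀ :=
    (hF.comp_hasDerivAt c₀ ((hasDerivAt_id c₀).prodMk (hasDerivAt_const c₀ (c₁, c₂)))).unique h₀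
  have e₁ : f (0, 1, 0) = p₁ :=
    (hF.comp_hasDerivAt c₁ ((hasDerivAt_const c₁ c₀).prodMk
      ((hasDerivAt_id c₁).prodMk (hasDerivAt_const c₁ c₂)))).unique h₁
  have e₂ : f (0, 0, 1) = p₂ :=
    (hF.comp_hasDerivAt c₂ ((hasDerivAt_const c₂ c₀).prodMk
      ((hasDerivAt_const c₂ c₁).prodMk (hasDerivAt_id c₂)))).unique h₂
  have hv : v = v.1 • ((1 : ℝ), (0 : ℝ), (0 : ℝ)) + v.2.1 • ((0 : ℝ), (1 : ℝ), (0 : ℝ))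
      + v.2.2 • ((0 : ℝ), (0 : ℝ), (1 : ℝ)) := by
    ext <;> simp
  rw [hv, map_add, map_add, map_smul, map_smul, map_smul, e₀, e₁, e₂]
  simp [smul_eq_mul]

theorem hasDerivAt_line_of_hasDerivAt_partials {L : ℝ → ℝ → ℝ → ℝ} {c₀ c₁ c₂ p₀ p₁ p₂ : ℝ}
    (hL : DifferentiableAt ℝ (fun p : ℝ × ℝ × ℝ => L p.1 p.2.1 p.2.2) (c₀, c₁, c₂))
    (h₀ : HasDerivAt (fun x => L x c₁ c₂) p₀ c₀)
    (h₁ : HasDerivAt (fun x => L c₀ x c₂) p₁ c₁)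
    (h₂ : HasDerivAt (fun x => L c₀ c₁ x) p₂ c₂) (α₀ α₁ α₂ : ℝ) :
    HasDerivAt (fun ε => L (c₀ + ε * α₀) (c₁ + ε * α₁) (c₂ + ε * α₂))
      (α₀ * p₀ + α₁ * p₁ + α₂ * p₂) 0 := by
  have affine (c α : ℝ) : HasDerivAt (fun ε : ℝ => c + ε * α) α 0 := by
    simpa using ((hasDerivAt_id (0 : ℝ)).mul_const α).const_add c
  have hline : HasDerivAt (fun ε : ℝ => (c₀ + ε * α₀, c₁ + ε * α₁, c₂ + ε * α₂))
      (α₀, α₁, α₂) 0 :=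
    (affine c₀ α₀).prodMk ((affine c₁ α₁).prodMk (affine c₂ α₂))
  rw [← hL.hasFDerivAt.apply_eq_of_hasDerivAt_partials h₀ h₁ h₂ (α₀, α₁, α₂)]
  exact hL.hasFDerivAt.comp_hasDerivAt_of_eq 0 hline (by simp)

theorem hasDerivAt_discreteAction_add_smul {L L0 L1 L2 : ℤ → ℝ → ℝ → ℝ → ℝ}
    (hL : ∀ t, Differentiable ℝ (fun p : ℝ × ℝ × ℝ => L t p.1 p.2.1 p.2.2))
    (hL0 : ∀ (t : ℤ) (u₀ u₁ u₂ : ℝ), HasDerivAt (fun x => L t x u₁ u₂) (L0 t u₀ u₁ u₂) u₀)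
    (hL1 : ∀ (t : ℤ) (u₀ u₁ u₂ : ℝ), HasDerivAt (fun x => L t u₀ x u₂) (L1 t u₀ u₁ u₂) u₁)
    (hL2 : ∀ (t : ℤ) (u₀ u₁ u₂ : ℝ), HasDerivAt (fun x => L t u₀ u₁ x) (L2 t u₀ u₁ u₂) u₂)
    (s : Finset ℤ) (y η : ℤ → ℝ) :
    HasDerivAt (fun ε : ℝ => discreteAction L s (y + ε • η)) (firstVariation L0 L1 L2 s y η) 0 := by
  refine HasDerivAt.fun_sum fun t _ => ?_
  refine (hasDerivAt_line_of_hasDerivAt_partials (c₀ := y (t + 2)) (c₁ := y (t + 2) - y (t + 1))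
    (c₂ := y (t + 2) - 2 * y (t + 1) + y t) (hL t _) (hL0 t _ _ _) (hL1 t _ _ _) (hL2 t _ _ _)
    (η (t + 2)) (η (t + 2) - η (t + 1)) (η (t + 2) - 2 * η (t + 1) + η t)).congr_of_eventuallyEq
    (Eventually.of_forall fun ε => ?_)
  simp only [evalJet, Pi.add_apply, Pi.smul_apply, smul_eq_mul]
  congr 1 <;> ring

theorem firstVariation_single {s : Finset ℤ} {t : ℤ} (ht : t ∈ s) (ht₁ : t + 1 ∈ s)
    (ht₂ : t + 2 ∈ s) (L0 L1 L2 : ℤ → ℝ → ℝ → ℝ → ℝ) (y : ℤ → ℝ) :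
    firstVariation L0 L1 L2 s y (Pi.single (t + 2) 1) = eulerLagrange L0 L1 L2 y t := by
  have hsub : {t, t + 1, t + 2} ⊆ s := by simp [Finset.insert_subset_iff, ht, ht₁, ht₂]
  rw [firstVariation, ← Finset.sum_subset hsub]
  · rw [Finset.sum_insert (by simp), Finset.sum_insert (by simp), Finset.sum_singleton]
    simp only [Pi.single_apply, add_assoc, eulerLagrange]
    norm_num
    ring
  · intro u _ hu
    simp only [Finset.mem_insert, Finset.mem_singleton, not_or] at hu
    simp [show u + 2 ≠ t + 2 by omega, show u + 1 ≠ t + 2 by omega,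
      show u ≠ t + 2 by omega]

theorem isLocalMin_add_smul {ι : Type*} {J : (ι → ℝ) → ℝ} {S : Set (ι → ℝ)} {K : Finset ι}
    {y η : ι → ℝ} {δ : ℝ} (hδ : 0 < δ)
    (hmin : ∀ z ∈ S, (∀ i ∈ K, |z i - y i| < δ) → J y ≤ J z) (hS : ∀ ε : ℝ, y + ε • η ∈ S) :
    IsLocalMin (fun ε : ℝ => J (y + ε • η)) 0 := by
  have hnear : ∀ i ∈ K, ∀ᶠ ε in 𝓝 (0 : ℝ), |(y + ε • η) i - y i| < δ := fun i _ =>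
    ContinuousAt.eventually_lt (by fun_prop) continuousAt_const (by simpa using hδ)
  filter_upwards [(eventually_all_finset K).2 hnear] with ε hε
  simpa using hmin _ (hS ε) hε

theorem discrete_euler_lagrange_second_order_general (a b : ℤ)
    (L L0 L1 L2 : ℤ → ℝ → ℝ → ℝ → ℝ)
    (hC : ∀ t : ℤ, ContDiff ℝ 1 (fun p : ℝ × ℝ × ℝ => L t p.1 p.2.1 p.2.2))
    (hL0 : ∀ (t : ℤ) (u₀ u₁ u₂ : ℝ), HasDerivAt (fun x => L t x u₁ u₂) (L0 t u₀ u₁ u₂) u₀)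
    (hL1 : ∀ (t : ℤ) (u₀ u₁ u₂ : ℝ), HasDerivAt (fun x => L t u₀ x u₂) (L1 t u₀ u₁ u₂) u₁)
    (hL2 : ∀ (t : ℤ) (u₀ u₁ u₂ : ℝ), HasDerivAt (fun x => L t u₀ u₁ x) (L2 t u₀ u₁ u₂) u₂)
    (ya yb ya1 yb1 : ℝ) (ystar : ℤ → ℝ)
    (hbc : ystar a = ya ∧ ystar (b - 1) = yb ∧
      ystar (a + 1) - ystar a = ya1 ∧ ystar b - ystar (b - 1) = yb1)
    (hmin : ∃ δ > (0 : ℝ), ∀ y : ℤ → ℝ,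
      (y a = ya ∧ y (b - 1) = yb ∧ y (a + 1) - y a = ya1 ∧ y b - y (b - 1) = yb1) →
      (∀ t ∈ Finset.Icc a b, |y t - ystar t| < δ) →
      ∑ t ∈ Finset.Icc a (b - 2),
          L t (ystar (t + 2)) (ystar (t + 2) - ystar (t + 1))
            (ystar (t + 2) - 2 * ystar (t + 1) + ystar t)
        ≤ ∑ t ∈ Finset.Icc a (b - 2),
            L t (y (t + 2)) (y (t + 2) - y (t + 1)) (y (t + 2) - 2 * y (t + 1) + y t)) :
    ∀ t ∈ Finset.Icc a (b - 4),
      L0 t (ystar (t + 2)) (ystar (t + 2) - ystar (t + 1))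
          (ystar (t + 2) - 2 * ystar (t + 1) + ystar t)
      - (L1 (t + 1) (ystar (t + 3)) (ystar (t + 3) - ystar (t + 2))
            (ystar (t + 3) - 2 * ystar (t + 2) + ystar (t + 1))
         - L1 t (ystar (t + 2)) (ystar (t + 2) - ystar (t + 1))
            (ystar (t + 2) - 2 * ystar (t + 1) + ystar t))
      + (L2 (t + 2) (ystar (t + 4)) (ystar (t + 4) - ystar (t + 3))
            (ystar (t + 4) - 2 * ystar (t + 3) + ystar (t + 2))
         - 2 * L2 (t + 1) (ystar (t + 3)) (ystar (t + 3) - ystar (t + 2))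
            (ystar (t + 3) - 2 * ystar (t + 2) + ystar (t + 1))
         + L2 t (ystar (t + 2)) (ystar (t + 2) - ystar (t + 1))
            (ystar (t + 2) - 2 * ystar (t + 1) + ystar t)) = 0 := by
  intro t ht
  obtain ⟨hta, htb⟩ := Finset.mem_Icc.1 ht
  obtain ⟨δ, hδ, hmin⟩ := hmin
  set η : ℤ → ℝ := Pi.single (t + 2) 1
  have hη : ∀ u, u ≠ t + 2 → η u = 0 := fun u hu => Pi.single_eq_of_ne hu 1
  have hadmissible (ε : ℝ) : ystar + ε • η ∈ {y : ℤ → ℝ | y a = ya ∧ y (b - 1) = yb ∧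
      y (a + 1) - y a = ya1 ∧ y b - y (b - 1) = yb1} := by
    simpa [hη a (by omega), hη (a + 1) (by omega), hη (b - 1) (by omega), hη b (by omega)]
      using hbc
  have hloc :=
    isLocalMin_add_smul (J := discreteAction L (Finset.Icc a (b - 2))) hδ hmin hadmissible
  have hvar := hloc.hasDerivAt_eq_zero <| hasDerivAt_discreteAction_add_smul
    (fun u => (hC u).differentiable one_ne_zero) hL0 hL1 hL2 _ ystar η
  rw [firstVariation_single (Finset.mem_Icc.2 ⟨by omega, by omega⟩)
    (Finset.mem_Icc.2 ⟨by omega, by omega⟩) (Finset.mem_Icc.2 ⟨by omega, by omega⟩)] at hvar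
  simpa [eulerLagrange, evalJet, add_assoc] using hvar

/-- Discrete higher-order Euler–Lagrange equation (`r = 2`, `T = ℤ`): if `y*` is a
local minimizer (sup norm) of `𝓛[y] = ∑_{t=a}^{b−2} L(t, y(t+2), Δy(t+1), Δ²y(t))`
subject to `y(a) = y_a`, `y(b−1) = y_b`, `Δy(a) = y_a¹`, `Δy(b−1) = y_b¹`, then
`L_{u₀}(·) − Δ[L_{u₁}(·)] + Δ²[L_{u₂}(·)] = 0` on `{a, …, b−4}`. Here `L0, L1, L2`
are the partial derivatives of `L` with respect to `u₀, u₁, u₂`. -/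
theorem discrete_euler_lagrange_second_order (a b : ℤ) (hab : a + 5 ≤ b)
    (L L0 L1 L2 : ℤ → ℝ → ℝ → ℝ → ℝ)
    (hC : ∀ t : ℤ, ContDiff ℝ 1 (fun p : ℝ × ℝ × ℝ => L t p.1 p.2.1 p.2.2))
    (hL0 : ∀ (t : ℤ) (u₀ u₁ u₂ : ℝ), HasDerivAt (fun x => L t x u₁ u₂) (L0 t u₀ u₁ u₂) u₀)
    (hL1 : ∀ (t : ℤ) (u₀ u₁ u₂ : ℝ), HasDerivAt (fun x => L t u₀ x u₂) (L1 t u₀ u₁ u₂) u₁)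
    (hL2 : ∀ (t : ℤ) (u₀ u₁ u₂ : ℝ), HasDerivAt (fun x => L t u₀ u₁ x) (L2 t u₀ u₁ u₂) u₂)
    (ya yb ya1 yb1 : ℝ) (ystar : ℤ → ℝ)
    (hbc : ystar a = ya ∧ ystar (b - 1) = yb ∧
      ystar (a + 1) - ystar a = ya1 ∧ ystar b - ystar (b - 1) = yb1)
    (hmin : ∃ δ > (0 : ℝ), ∀ y : ℤ → ℝ,
      (y a = ya ∧ y (b - 1) = yb ∧ y (a + 1) - y a = ya1 ∧ y b - y (b - 1) = yb1) →
      (∀ t ∈ Finset.Icc a b, |y t - ystar t| < δ) →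
      ∑ t ∈ Finset.Icc a (b - 2),
          L t (ystar (t + 2)) (ystar (t + 2) - ystar (t + 1))
            (ystar (t + 2) - 2 * ystar (t + 1) + ystar t)
        ≤ ∑ t ∈ Finset.Icc a (b - 2),
            L t (y (t + 2)) (y (t + 2) - y (t + 1)) (y (t + 2) - 2 * y (t + 1) + y t)) :
    ∀ t ∈ Finset.Icc a (b - 4),
      L0 t (ystar (t + 2)) (ystar (t + 2) - ystar (t + 1))
          (ystar (t + 2) - 2 * ystar (t + 1) + ystar t)
      - (L1 (t + 1) (ystar (t + 3)) (ystar (t + 3) - ystar (t + 2))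
            (ystar (t + 3) - 2 * ystar (t + 2) + ystar (t + 1))
         - L1 t (ystar (t + 2)) (ystar (t + 2) - ystar (t + 1))
            (ystar (t + 2) - 2 * ystar (t + 1) + ystar t))
      + (L2 (t + 2) (ystar (t + 4)) (ystar (t + 4) - ystar (t + 3))
            (ystar (t + 4) - 2 * ystar (t + 3) + ystar (t + 2))
         - 2 * L2 (t + 1) (ystar (t + 3)) (ystar (t + 3) - ystar (t + 2))
            (ystar (t + 3) - 2 * ystar (t + 2) + ystar (t + 1))
         + L2 t (ystar (t + 2)) (ystar (t + 2) - ystar (t + 1))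
            (ystar (t + 2) - 2 * ystar (t + 1) + ystar t)) = 0 :=
  discrete_euler_lagrange_second_order_general a b L L0 L1 L2 hC hL0 hL1 hL2 ya yb ya1 yb1 ystar hbc
    hmin
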